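/- arXiv:1602.07262 — 5 statements merged into one kernel-verified Lean document; each statement's English description precedes it below -/
import Mathlib

section
/- Let $\beta \in (0,1)$ and let $k \geq 1$ be an integer. Then $\frac{\Gamma(k)}{\Gamma(1+\beta(k-1))} \leq \frac{2\,\Gamma(1+k)}{\Gamma(1+\beta k)}$. -/
/-!
Log-convexity of `Γ` gives `Γ(s + β) ≤ Γ(s)^(1-β) Γ(s+1)^β = s^β Γ(s)`. With `s = 1 + β(k-1)`
this reads `Γ(1 + βk) ≤ s^β Γ(s) ≤ k Γ(s)`, which is the claim even without the factor `2`,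
since `Γ(1 + k) = k Γ(k)`.
-/

namespace Real

theorem Gamma_add_le_rpow_mul_Gamma {s t : ℝ} (hs : 0 < s) (ht₀ : 0 ≤ t) (ht₁ : t ≤ 1) :
    Gamma (s + t) ≤ s ^ t * Gamma s := by
  rcases ht₀.eq_or_lt with rfl | ht₀
  · simp
  rcases ht₁.eq_or_lt with rfl | ht₁
  · rw [rpow_one, Gamma_add_one hs.ne']
  have hΓ := Gamma_pos_of_pos hs
  calc Gamma (s + t) = Gamma ((1 - t) * s + t * (s + 1)) := by ring_nf
    _ ≤ Gamma s ^ (1 - t) * Gamma (s + 1) ^ t :=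
      Gamma_mul_add_mul_le_rpow_Gamma_mul_rpow_Gamma hs (by linarith) (by linarith) ht₀ (by ring)
    _ = s ^ t * Gamma s := by
      rw [Gamma_add_one hs.ne', mul_rpow hs.le hΓ.le, mul_left_comm, ← rpow_add hΓ]
      norm_num

theorem Gamma_add_le_mul_Gamma {s t : ℝ} (hs : 1 ≤ s) (ht₀ : 0 ≤ t) (ht₁ : t ≤ 1) :
    Gamma (s + t) ≤ s * Gamma s :=
  (Gamma_add_le_rpow_mul_Gamma (by linarith) ht₀ ht₁).trans <|
    mul_le_mul_of_nonneg_right (rpow_le_self_of_one_le hs ht₁) (Gamma_pos_of_pos (by linarith)).le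

end Real

theorem gamma_ratio_bound' (β : ℝ) (hβ : β ∈ Set.Ioo (0:ℝ) 1) (k : ℕ) (hk : 1 ≤ k) :
    Real.Gamma (k : ℝ) / Real.Gamma (1 + β * ((k : ℝ) - 1)) ≤
      2 * Real.Gamma (1 + (k : ℝ)) / Real.Gamma (1 + β * k) := by
  obtain ⟨hβ₀, hβ₁⟩ := hβ
  have hk' : (1 : ℝ) ≤ k := by exact_mod_cast hk
  set s := 1 + β * ((k : ℝ) - 1)
  have hs : 1 ≤ s := by nlinarith
  have hΓs := Real.Gamma_pos_of_pos (by linarith : 0 < s)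
  have hΓk := Real.Gamma_pos_of_pos (by linarith : (0 : ℝ) < k)
  have hΓβk := Real.Gamma_pos_of_pos (by positivity : 0 < 1 + β * k)
  have key : Real.Gamma (1 + β * k) ≤ k * Real.Gamma s :=
    calc Real.Gamma (1 + β * k) = Real.Gamma (s + β) := by congr 1; simp only [s]; ring
      _ ≤ s * Real.Gamma s := Real.Gamma_add_le_mul_Gamma hs hβ₀.le hβ₁.le
      _ ≤ k * Real.Gamma s := mul_le_mul_of_nonneg_right (by nlinarith) hΓs.le
  rw [add_comm, Real.Gamma_add_one (by positivity), div_le_div_iff₀ hΓs hΓβk]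
  nlinarith [mul_le_mul_of_nonneg_left key hΓk.le]
end

section
/- For every $\beta \in (0,1)$, $d \in \{1,2,3\}$ and every integer $k \geq 1$, $\frac{\Gamma(\beta(k - d/4) + 1/2)}{\Gamma(1+\beta k)} \leq \frac{\Gamma(\beta(1 - d/4) + 1/2)}{\Gamma(1+\beta)}$. -/
/-!
Since `log ∘ Γ` is convex, `a ↦ Γ a / Γ (a + b)` is antitone on `(0, ∞)` for every `b ≥ 0`.
Both sides of the inequality are values of this ratio with `b = 1/2 + β d / 4`, at
`a = β (k - d/4) + 1/2 ≥ β (1 - d/4) + 1/2 > 0`.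
-/

open Set

/-- `y` and `z` are convex combinations of `x` and `w` with swapped weights. -/
theorem ConvexOn.add_le_add_of_add_eq {s : Set ℝ} {f : ℝ → ℝ} (hf : ConvexOn ℝ s f)
    {x y z w : ℝ} (hx : x ∈ s) (hw : w ∈ s) (hxy : x ≤ y) (hxz : x ≤ z) (hsum : y + z = x + w) :
    f y + f z ≤ f x + f w := by
  rcases eq_or_lt_of_le (show x ≤ w by linarith) with rfl | hxw
  · obtain rfl : y = x := by linarith
    obtain rfl : z = y := by linarith
    rfl
  have hwx : 0 < w - x := by linarith
  have hs : 0 ≤ (w - y) / (w - x) := div_nonneg (by linarith) hwx.le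
  have ht : 0 ≤ (y - x) / (w - x) := div_nonneg (by linarith) hwx.le
  have hweights : (w - y) / (w - x) + (y - x) / (w - x) = 1 := by field_simp; ring
  have hy := hf.2 hx hw hs ht hweights
  have hz := hf.2 hx hw ht hs (by rw [add_comm, hweights])
  have hy_eq : (w - y) / (w - x) * x + (y - x) / (w - x) * w = y := by
    field_simp; ring
  have hz_eq : (y - x) / (w - x) * x + (w - y) / (w - x) * w = z := by
    rw [show z = x + w - y by linarith]; field_simp; ring
  simp only [smul_eq_mul, hy_eq, hz_eq] at hy hz
  linear_combination hy + hz + (f x + f w) * hweights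

theorem Real.antitoneOn_Gamma_div_Gamma_add {b : ℝ} (hb : 0 ≤ b) :
    AntitoneOn (fun a => Real.Gamma a / Real.Gamma (a + b)) (Ioi 0) := by
  intro a (ha : 0 < a) a' (ha' : 0 < a') haa'
  have hΓ {x : ℝ} (hx : 0 < x) : 0 < Real.Gamma x := Real.Gamma_pos_of_pos hx
  have hlog : Real.log (Real.Gamma a' * Real.Gamma (a + b)) ≤
      Real.log (Real.Gamma a * Real.Gamma (a' + b)) := by
    rw [Real.log_mul (hΓ ha').ne' (hΓ (by linarith)).ne',
      Real.log_mul (hΓ ha).ne' (hΓ (by linarith)).ne']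
    exact Real.convexOn_log_Gamma.add_le_add_of_add_eq ha (show 0 < a' + b by linarith)
      haa' (by linarith) (by ring)
  rw [Real.log_le_log_iff (mul_pos (hΓ ha') (hΓ (by linarith)))
    (mul_pos (hΓ ha) (hΓ (by linarith)))] at hlog
  rw [div_le_div_iff₀ (hΓ (by linarith)) (hΓ (by linarith))]
  linarith

theorem gamma_ratio_mono_half (β : ℝ) (hβ : β ∈ Set.Ioo (0:ℝ) 1) (d : ℕ)
    (hd : d ∈ ({1, 2, 3} : Set ℕ)) (k : ℕ) (hk : 1 ≤ k) :
    Real.Gamma (β * ((k : ℝ) - d / 4) + 1 / 2) / Real.Gamma (1 + β * k) ≤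
      Real.Gamma (β * (1 - (d : ℝ) / 4) + 1 / 2) / Real.Gamma (1 + β) := by
  obtain ⟨hβ0, -⟩ := hβ
  have hd3 : (d : ℝ) ≤ 3 := by rcases hd with rfl | rfl | rfl <;> norm_num
  have hk1 : (1 : ℝ) ≤ k := by exact_mod_cast hk
  have hpos : 0 < β * (1 - (d : ℝ) / 4) + 1 / 2 := by nlinarith
  have hk_sum : 1 + β * k = β * ((k : ℝ) - d / 4) + 1 / 2 + (1 / 2 + β * d / 4) := by ring
  have h1_sum : 1 + β = β * (1 - (d : ℝ) / 4) + 1 / 2 + (1 / 2 + β * d / 4) := by ring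
  rw [hk_sum, h1_sum]
  exact Real.antitoneOn_Gamma_div_Gamma_add (by positivity) hpos
    (show 0 < β * ((k : ℝ) - d / 4) + 1 / 2 by nlinarith) (by nlinarith)
end

section
/- For every $\beta \in (0,1)$, $d \in \{1,2,3\}$ and every integer $k \geq 1$, $\frac{\Gamma(\beta(k - d/4))}{\Gamma(1+\beta k)} \leq \frac{\Gamma(\beta(1 - d/4))}{\Gamma(1+\beta)}$. -/
/-!
Since `log ∘ Γ` is convex on `(0, ∞)`, its increments `log Γ (x + y) - log Γ x` over a step of
fixed length `y ≥ 0` grow with `x`; hence `Γ x / Γ (x + y)` decreases in `x`. The theorem is the case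
`y = 1 + β d / 4`, comparing `x = β (1 - d / 4)` with `x = β (k - d / 4)`.
-/

open Set

theorem ConvexOn.sub_le_sub_of_le {𝕜 : Type*} [Field 𝕜] [LinearOrder 𝕜] [IsStrictOrderedRing 𝕜]
    {s : Set 𝕜} {f : 𝕜 → 𝕜} (hf : ConvexOn 𝕜 s f) {x x' h : 𝕜} (hx : x ∈ s) (hxh : x + h ∈ s)
    (hx' : x' ∈ s) (hx'h : x' + h ∈ s) (hxx' : x ≤ x') (hh : 0 ≤ h) :
    f (x + h) - f x ≤ f (x' + h) - f x' := by
  rcases hh.eq_or_lt with rfl | hh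
  · simp
  -- Both slopes over a step of length `h` are compared with the secant from `x` to `x' + h`.
  have left : (f (x + h) - f x) / (x + h - x) ≤ (f (x' + h) - f x) / (x' + h - x) :=
    hf.secant_mono hx hxh hx'h (by linarith) (by linarith) (by linarith)
  have right : (f x - f (x' + h)) / (x - (x' + h)) ≤ (f x' - f (x' + h)) / (x' - (x' + h)) :=
    hf.secant_mono hx'h hx hx' (by linarith) (by linarith) hxx'
  rw [← neg_div_neg_eq, neg_sub, neg_sub] at right
  simp only [add_sub_cancel_left, sub_add_cancel_left] at left right
  have slopes := left.trans right
  rw [div_neg, ← neg_div, neg_sub] at slopes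
  rwa [div_le_div_iff_of_pos_right hh] at slopes

theorem Real.Gamma_div_Gamma_add_antitoneOn {y : ℝ} (hy : 0 ≤ y) :
    AntitoneOn (fun x => Real.Gamma x / Real.Gamma (x + y)) (Ioi 0) := by
  intro a (ha : 0 < a) b (hb : 0 < b) hab
  have hΓ : ∀ {x}, 0 < x → 0 < Real.Gamma x := Real.Gamma_pos_of_pos
  have hlog : ∀ {x}, 0 < x →
      Real.log (Real.Gamma x / Real.Gamma (x + y)) =
        Real.log (Real.Gamma x) - Real.log (Real.Gamma (x + y)) := fun hx =>
    Real.log_div (hΓ hx).ne' (hΓ (by linarith)).ne'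
  have increments := Real.convexOn_log_Gamma.sub_le_sub_of_le ha
    (show 0 < a + y by linarith) hb (show 0 < b + y by linarith) hab hy
  simp only [Function.comp_apply] at increments
  rw [← Real.log_le_log_iff (div_pos (hΓ hb) (hΓ (by linarith)))
    (div_pos (hΓ ha) (hΓ (by linarith))), hlog ha, hlog hb]
  linarith

theorem gamma_ratio_mono (β : ℝ) (hβ : β ∈ Set.Ioo (0:ℝ) 1) (d : ℕ)
    (hd : d ∈ ({1, 2, 3} : Set ℕ)) (k : ℕ) (hk : 1 ≤ k) :
    Real.Gamma (β * ((k : ℝ) - d / 4)) / Real.Gamma (1 + β * k) ≤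
      Real.Gamma (β * (1 - (d : ℝ) / 4)) / Real.Gamma (1 + β) := by
  have hβ0 : 0 < β := hβ.1
  have hd4 : (d : ℝ) / 4 < 1 := by
    rcases hd with rfl | rfl | rfl <;> norm_num
  have hk1 : (1 : ℝ) ≤ k := by exact_mod_cast hk
  have hy : 0 ≤ 1 + β * (d / 4) := by positivity
  rw [show 1 + β * k = β * (k - d / 4) + (1 + β * (d / 4)) by ring,
    show 1 + β = β * (1 - d / 4) + (1 + β * (d / 4)) by ring]
  exact Real.Gamma_div_Gamma_add_antitoneOn hy
    (mul_pos hβ0 (by linarith) : 0 < β * (1 - (d : ℝ) / 4))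
    (mul_pos hβ0 (by linarith) : 0 < β * ((k : ℝ) - d / 4))
    (mul_le_mul_of_nonneg_left (by linarith) hβ0.le)
end

section
/- For every $\beta \in (0,1)$, $d \in \{1,2,3\}$ and every integer $k \geq 1$, $\frac{\Gamma(\beta(k-d/4))\,\Gamma(\beta(k-d/4)+1/2)}{\Gamma(1+\beta k)^2} \leq \frac{2^{1-2\beta(1-d/4)}\sqrt{\pi}\,\Gamma(2\beta(1-d/4))}{\Gamma(1+\beta)^2}$. -/
/-!
Since `log ∘ Γ` is convex, its increments over a fixed length decrease as the base point moves
left, so `Γ x / Γ (x + c)` is antitone on `(0, ∞)`. Applied at the shifts `c` and `c - 1/2` this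
compares `Γ(a) Γ(a + 1/2) / Γ(1 + βk)²`, `a = β(k - d/4)`, with its value at `k = 1`, which the
Legendre duplication formula evaluates.
-/

open Real Set

theorem ConvexOn.map_add_add_map_le {𝕜 : Type*} [Field 𝕜] [LinearOrder 𝕜] [IsStrictOrderedRing 𝕜]
    {s : Set 𝕜} {f : 𝕜 → 𝕜} (hf : ConvexOn 𝕜 s f) {x y δ : 𝕜} (hx : x ∈ s) (hyδ : y + δ ∈ s)
    (hxy : x ≤ y) (hδ : 0 ≤ δ) : f (x + δ) + f y ≤ f x + f (y + δ) := by
  rcases (show x ≤ y + δ by linarith).eq_or_lt with hL | hL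
  · obtain rfl : δ = 0 := by linarith
    obtain rfl : y = x := by linarith
    simp
  -- `x + δ` and `y` are the combinations of `x` and `y + δ` with weights `(a, 1 - a)`, `(1 - a, a)`
  set a := (y - x) / (y + δ - x) with ha
  have ha0 : 0 ≤ a := div_nonneg (by linarith) (by linarith)
  have ha1 : 0 ≤ 1 - a := by
    rw [ha, one_sub_div (by linarith)]; exact div_nonneg (by linarith) (by linarith)
  have haL : a * (y + δ - x) = y - x := div_mul_cancel₀ _ (by linarith)
  have hleft := hf.2 hx hyδ ha0 ha1 (add_sub_cancel a 1)
  have hright := hf.2 hx hyδ ha1 ha0 (sub_add_cancel 1 a)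
  simp only [smul_eq_mul] at hleft hright
  rw [show a * x + (1 - a) * (y + δ) = x + δ by linear_combination -haL] at hleft
  rw [show (1 - a) * x + a * (y + δ) = y by linear_combination haL] at hright
  linear_combination hleft + hright

theorem Real.Gamma_div_Gamma_add_antitoneOn_s6 {c : ℝ} (hc : 0 ≤ c) :
    AntitoneOn (fun x ↦ Gamma x / Gamma (x + c)) (Ioi 0) := by
  intro x (hx : 0 < x) y (hy : 0 < y) hxy
  have hlog := convexOn_log_Gamma.map_add_add_map_le hx (show 0 < y + c by positivity) hxy hc
  simp only [Function.comp_apply] at hlog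
  have hprod : Gamma (x + c) * Gamma y ≤ Gamma x * Gamma (y + c) := by
    rwa [← log_le_log_iff (by positivity) (by positivity), log_mul, log_mul]
    all_goals positivity
  rw [div_le_div_iff₀ (by positivity) (by positivity)]
  linarith

theorem Real.Gamma_mul_Gamma_add_half_div_sq_antitoneOn {c : ℝ} (hc : 1 / 2 ≤ c) :
    AntitoneOn (fun x ↦ Gamma x * Gamma (x + 1 / 2) / Gamma (x + c) ^ 2) (Ioi 0) := by
  intro x (hx : 0 < x) y (hy : 0 < y) hxy
  have hfirst := Gamma_div_Gamma_add_antitoneOn_s6 (c := c) (by linarith) hx hy hxy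
  have hsecond := Gamma_div_Gamma_add_antitoneOn_s6 (c := c - 1 / 2) (by linarith)
    (show 0 < x + 1 / 2 by positivity) (show 0 < y + 1 / 2 by positivity) (by linarith)
  simp only [add_add_sub_cancel] at hfirst hsecond
  calc Gamma y * Gamma (y + 1 / 2) / Gamma (y + c) ^ 2
      = Gamma y / Gamma (y + c) * (Gamma (y + 1 / 2) / Gamma (y + c)) := by ring
    _ ≤ Gamma x / Gamma (x + c) * (Gamma (x + 1 / 2) / Gamma (x + c)) :=
        mul_le_mul hfirst hsecond (by positivity) (by positivity)
    _ = Gamma x * Gamma (x + 1 / 2) / Gamma (x + c) ^ 2 := by ring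

theorem gamma_product_ratio_bound (β : ℝ) (hβ : β ∈ Set.Ioo (0:ℝ) 1) (d : ℕ)
    (hd : d ∈ ({1, 2, 3} : Set ℕ)) (k : ℕ) (hk : 1 ≤ k) :
    Real.Gamma (β * ((k : ℝ) - d / 4)) * Real.Gamma (β * ((k : ℝ) - d / 4) + 1 / 2) /
        (Real.Gamma (1 + β * k)) ^ 2 ≤
      2 ^ (1 - 2 * β * (1 - (d : ℝ) / 4)) * Real.sqrt Real.pi *
        Real.Gamma (2 * β * (1 - (d : ℝ) / 4)) / (Real.Gamma (1 + β)) ^ 2 := by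
  obtain ⟨hβ0, -⟩ := hβ
  have hd4 : (d : ℝ) < 4 := by rcases hd with rfl | rfl | rfl <;> norm_num
  have hk1 : (1 : ℝ) ≤ k := by exact_mod_cast hk
  have hbase : 0 < β * (1 - d / 4) := mul_pos hβ0 (by linarith)
  have hmono := Gamma_mul_Gamma_add_half_div_sq_antitoneOn (c := 1 + β * d / 4)
    (le_add_of_le_of_nonneg (by norm_num) (by positivity))
    hbase (hbase.trans_le (by gcongr)) (by gcongr : β * (1 - d / 4) ≤ β * (k - d / 4))
  dsimp only at hmono
  rw [show β * ((k : ℝ) - d / 4) + (1 + β * d / 4) = 1 + β * k by ring,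
    show β * (1 - (d : ℝ) / 4) + (1 + β * d / 4) = 1 + β by ring,
    Gamma_mul_Gamma_add_half_of_pos hbase, ← mul_assoc] at hmono
  exact hmono.trans_eq (by ring)
end

section
/- Let $\beta \in (0,1)$, $d \in \{1,2,3\}$, and let $g_\beta$ be the density of the standard $\beta$-stable subordinator with $\int_0^\infty w^{-\beta k} g_\beta(w)\,dw = \Gamma(1+k)/\Gamma(1+\beta k)$ for all nonnegative integers $k$. Set $a_k^d(\beta) := \int_0^\infty w^{-\beta(k-d/4)} g_\beta(w)\,dw$. Then for every integer $k \geq 1$, $\frac{a_k^d(\beta)\sqrt{\Gamma(1+\beta(2k-d/2))}}{k!} \leq \frac{3\sqrt{2\beta(k-d/4)}\,\sqrt{\Gamma(2\beta(1-d/4))}}{\Gamma(1+\beta)}\, 2^{\beta(k-1)}$. -/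
/-!
On `(0, ∞)` we have `w^(-β(k-d/4)) ≤ 1 + w^(-βk)`, and `Γ(1+βk) ≤ k!` by convexity of `Γ`, so the
moment `a_k^d(β)` is at most `2 k! / Γ(1+βk)`. Write `Γ(1+β(2k-d/2)) = X Γ(X)` with `X = 2(t+c)`,
`t = β(1-d/4)` and `c = β(k-1)`. Legendre's duplication formula turns `Γ(X)/Γ(2t)` into `4^c` times
`Γ(t+c)/Γ(t)` and `Γ(t+1/2+c)/Γ(t+1/2)`; by log-convexity of `Γ` the ratio `Γ(x+c)/Γ(x)` is
nondecreasing in `x`, so both are at most `Γ(1+β+c)/Γ(1+β) = Γ(1+βk)/Γ(1+β)`. The factor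
`Γ(1+βk)` cancels against the moment bound, leaving the claim with constant `2` in place of `3`.
-/

open MeasureTheory

theorem ConvexOn.map_add_sub_map_le {s : Set ℝ} {f : ℝ → ℝ} (hf : ConvexOn ℝ s f) {x y a : ℝ}
    (hx : x ∈ s) (hya : y + a ∈ s) (hxy : x ≤ y) (ha : 0 ≤ a) :
    f (x + a) - f x ≤ f (y + a) - f y := by
  rcases ha.eq_or_lt with rfl | ha
  · simp
  have hxa : x + a ∈ s := hf.1.ordConnected.out hx hya ⟨by linarith, by linarith⟩
  have hy : y ∈ s := hf.1.ordConnected.out hx hya ⟨hxy, by linarith⟩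
  -- Compare both increments with the slope of the chord from `x` to `y + a`.
  have h₁ := hf.secant_mono hx hxa hya (by linarith) (by linarith) (by linarith : x + a ≤ y + a)
  have h₂ := hf.secant_mono hya hx hy (by linarith) (by linarith) hxy
  rw [add_sub_cancel_left] at h₁
  rw [← neg_div_neg_eq, neg_sub, neg_sub, show y - (y + a) = -a by ring, div_neg, ← neg_div,
    neg_sub] at h₂
  exact (div_le_div_iff_of_pos_right ha).1 (h₁.trans h₂)

namespace Real

theorem rpow_neg_le_one_add_rpow_neg {w s r : ℝ} (hw : 0 < w) (hs : 0 ≤ s) (hsr : s ≤ r) :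
    w ^ (-s) ≤ 1 + w ^ (-r) := by
  rcases le_or_gt 1 w with h | h
  · linarith [rpow_le_one_of_one_le_of_nonpos h (neg_nonpos.2 hs), rpow_nonneg hw.le (-r)]
  · linarith [rpow_le_rpow_of_exponent_ge hw h.le (neg_le_neg hsr)]

theorem Gamma_add_div_Gamma_le {x y a : ℝ} (hx : 0 < x) (hxy : x ≤ y) (ha : 0 ≤ a) :
    Gamma (x + a) / Gamma x ≤ Gamma (y + a) / Gamma y := by
  have hy : 0 < y := hx.trans_le hxy
  have h := convexOn_log_Gamma.map_add_sub_map_le hx (show 0 < y + a by linarith) hxy ha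
  simp only [Function.comp_apply] at h
  rwa [← log_div (by positivity) (by positivity), ← log_div (by positivity) (by positivity),
    log_le_log_iff (by positivity) (by positivity)] at h

theorem Gamma_one_add_le_factorial {x : ℝ} {n : ℕ} (hx₀ : 0 ≤ x) (hxn : x ≤ n) :
    Gamma (1 + x) ≤ n.factorial := by
  have h := convexOn_Gamma.le_max_of_mem_Icc (x := 1) (y := (n : ℝ) + 1) (z := 1 + x)
    (by norm_num : (0:ℝ) < 1) (by positivity : (0:ℝ) < n + 1) ⟨by linarith, by linarith⟩
  rwa [Gamma_one, Gamma_nat_eq_factorial,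
    max_eq_right (by exact_mod_cast n.factorial_pos)] at h

theorem Gamma_two_mul_add_div_le {t y c : ℝ} (ht : 0 < t) (hty : t + 1 / 2 ≤ y) (hc : 0 ≤ c) :
    Gamma (2 * (t + c)) / Gamma (2 * t) ≤
      (2 : ℝ) ^ (2 * c) * (Gamma (y + c) / Gamma y) ^ 2 := by
  have h₁ := Gamma_add_div_Gamma_le ht (by linarith : t ≤ y) hc
  have h₂ := Gamma_add_div_Gamma_le (by linarith : 0 < t + 1 / 2) hty hc
  have hdup : Gamma (2 * (t + c)) / Gamma (2 * t) = (2 : ℝ) ^ (2 * c) *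
      (Gamma (t + c) / Gamma t * (Gamma (t + 1 / 2 + c) / Gamma (t + 1 / 2))) := by
    have e₁ := Gamma_mul_Gamma_add_half t
    have e₂ := Gamma_mul_Gamma_add_half (t + c)
    have hpow : (2 : ℝ) ^ (1 - 2 * t) = (2 : ℝ) ^ (2 * c) * (2 : ℝ) ^ (1 - 2 * (t + c)) := by
      rw [← rpow_add two_pos]; ring_nf
    rw [div_mul_div_comm, add_right_comm, e₁, e₂, hpow]
    field_simp
  have hy : 0 < y := by linarith
  rw [hdup, sq]
  gcongr

theorem sqrt_Gamma_two_mul_add_le {t y c : ℝ} (ht : 0 < t) (hty : t + 1 / 2 ≤ y) (hc : 0 ≤ c) :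
    √(Gamma (2 * (t + c))) ≤ 2 ^ c * √(Gamma (2 * t)) * (Gamma (y + c) / Gamma y) := by
  have hy : 0 < y := by linarith
  have h := Gamma_two_mul_add_div_le ht hty hc
  rw [div_le_iff₀ (by positivity)] at h
  calc √(Gamma (2 * (t + c)))
      ≤ √((2 ^ c * √(Gamma (2 * t)) * (Gamma (y + c) / Gamma y)) ^ 2) := by
        refine sqrt_le_sqrt (h.trans_eq ?_)
        have hpow : (2 : ℝ) ^ (2 * c) = (2 ^ c) ^ 2 := by
          rw [← rpow_mul_natCast two_pos.le]; ring_nf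
        rw [mul_pow, mul_pow, sq_sqrt (by positivity), hpow]
        ring
    _ = _ := sqrt_sq (by positivity)

end Real

theorem integral_rpow_neg_mul_le {μ : Measure ℝ} {g : ℝ → ℝ} {s r : ℝ} (hpos : ∀ᵐ w ∂μ, 0 < w)
    (hg : 0 ≤ᵐ[μ] g) (hs : 0 ≤ s) (hsr : s ≤ r) (hg_int : Integrable g μ)
    (hr_int : Integrable (fun w ↦ w ^ (-r) * g w) μ) :
    ∫ w, w ^ (-s) * g w ∂μ ≤ ∫ w, g w ∂μ + ∫ w, w ^ (-r) * g w ∂μ := by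
  rw [← integral_add hg_int hr_int]
  refine integral_mono_of_nonneg ?_ (hg_int.add hr_int) ?_
  · filter_upwards [hpos, hg] with w hw hgw using mul_nonneg (Real.rpow_nonneg hw.le _) hgw
  · filter_upwards [hpos, hg] with w hw hgw
    linarith [mul_le_mul_of_nonneg_right (Real.rpow_neg_le_one_add_rpow_neg hw hs hsr) hgw]

theorem setIntegral_rpow_neg_mul_le_two_mul {β s : ℝ} {g : ℝ → ℝ} {k : ℕ} (hβ₀ : 0 ≤ β)
    (hβ₁ : β ≤ 1) (hg : ∀ w, 0 ≤ g w)
    (hmom : ∀ m : ℕ, ∫ w in Set.Ioi (0:ℝ), w ^ (-(β * m)) * g w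
        = Real.Gamma (1 + m) / Real.Gamma (1 + β * m))
    (hs : 0 ≤ s) (hsk : s ≤ β * k) :
    ∫ w in Set.Ioi (0:ℝ), w ^ (-s) * g w ≤ 2 * (k.factorial / Real.Gamma (1 + β * k)) := by
  have h_int (m : ℕ) : Integrable (fun w ↦ w ^ (-(β * m)) * g w) (volume.restrict (Set.Ioi 0)) :=
    .of_integral_ne_zero (by rw [hmom m]; positivity)
  have hM₀ : ∫ w in Set.Ioi (0:ℝ), g w = 1 := by simpa using hmom 0
  have hMk : ∫ w in Set.Ioi (0:ℝ), w ^ (-(β * k)) * g w = k.factorial / Real.Gamma (1 + β * k) := by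
    rw [hmom k, add_comm 1 (k : ℝ), Real.Gamma_nat_eq_factorial]
  have h_one : 1 ≤ (k.factorial : ℝ) / Real.Gamma (1 + β * k) :=
    (one_le_div (by positivity)).2
      (Real.Gamma_one_add_le_factorial (by positivity) (mul_le_of_le_one_left k.cast_nonneg hβ₁))
  have h := integral_rpow_neg_mul_le (μ := volume.restrict (Set.Ioi 0))
    (ae_restrict_mem measurableSet_Ioi) (.of_forall hg) hs hsk (by simpa using h_int 0) (h_int k)
  rw [hM₀, hMk] at h
  linarith

theorem a_k_d_sqrt_gamma_bound_general (β : ℝ) (hβ : β ∈ Set.Ioo (0:ℝ) 1) (d : ℕ)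
    (hd : d ∈ ({1, 2, 3} : Set ℕ)) (g : ℝ → ℝ)
    (hg_nonneg : ∀ w, 0 ≤ g w)
    (hmom : ∀ m : ℕ, ∫ w in Set.Ioi (0:ℝ), w ^ (-(β * m)) * g w
        = Real.Gamma (1 + m) / Real.Gamma (1 + β * m))
    (k : ℕ) (hk : 1 ≤ k) :
    (∫ w in Set.Ioi (0:ℝ), w ^ (-(β * ((k : ℝ) - d / 4))) * g w) *
        Real.sqrt (Real.Gamma (1 + β * (2 * k - (d : ℝ) / 2))) / (k.factorial : ℝ) ≤
      3 * Real.sqrt (2 * β * ((k : ℝ) - d / 4)) *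
        Real.sqrt (Real.Gamma (2 * β * (1 - (d : ℝ) / 4))) / Real.Gamma (1 + β) *
        2 ^ (β * ((k : ℝ) - 1)) := by
  obtain ⟨hβ₀, hβ₁⟩ := hβ
  have hd₃ : (d : ℝ) ≤ 3 := by rcases hd with rfl | rfl | rfl <;> norm_num
  have hk₁ : (1 : ℝ) ≤ k := by exact_mod_cast hk
  have h_moment := setIntegral_rpow_neg_mul_le_two_mul (s := β * (k - d / 4)) (k := k) hβ₀.le hβ₁.le
    hg_nonneg hmom (by nlinarith) (by nlinarith)
  have h_sqrt : √(Real.Gamma (1 + β * (2 * k - (d : ℝ) / 2))) ≤ √(2 * β * ((k : ℝ) - d / 4)) *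
      (2 ^ (β * ((k : ℝ) - 1)) * √(Real.Gamma (2 * β * (1 - (d : ℝ) / 4))) *
        (Real.Gamma (1 + β * k) / Real.Gamma (1 + β))) := by
    have h := Real.sqrt_Gamma_two_mul_add_le (t := β * (1 - d / 4)) (y := 1 + β) (c := β * (k - 1))
      (by nlinarith) (by nlinarith) (by nlinarith)
    rw [show 1 + β * (2 * k - (d : ℝ) / 2) = 2 * β * (k - d / 4) + 1 by ring,
      Real.Gamma_add_one (by nlinarith), Real.sqrt_mul (by nlinarith)]
    rw [show 2 * (β * (1 - d / 4) + β * (k - 1)) = 2 * β * (k - d / 4) by ring,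
      show 1 + β + β * (k - 1) = 1 + β * k by ring, ← mul_assoc] at h
    exact mul_le_mul_of_nonneg_left h (Real.sqrt_nonneg _)
  calc _ ≤ 2 * (k.factorial / Real.Gamma (1 + β * k)) * (√(2 * β * ((k : ℝ) - d / 4)) *
        (2 ^ (β * ((k : ℝ) - 1)) * √(Real.Gamma (2 * β * (1 - (d : ℝ) / 4))) *
          (Real.Gamma (1 + β * k) / Real.Gamma (1 + β)))) / k.factorial := by gcongr
    _ = 2 * √(2 * β * ((k : ℝ) - d / 4)) * √(Real.Gamma (2 * β * (1 - (d : ℝ) / 4))) /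
        Real.Gamma (1 + β) * 2 ^ (β * ((k : ℝ) - 1)) := by field_simp
    _ ≤ _ := by gcongr; norm_num

theorem a_k_d_sqrt_gamma_bound (β : ℝ) (hβ : β ∈ Set.Ioo (0:ℝ) 1) (d : ℕ)
    (hd : d ∈ ({1, 2, 3} : Set ℕ)) (g : ℝ → ℝ)
    (hg_nonneg : ∀ w, 0 ≤ g w)
    (hg_prob : ∫ w in Set.Ioi (0:ℝ), g w = 1)
    (hmom : ∀ m : ℕ, ∫ w in Set.Ioi (0:ℝ), w ^ (-(β * m)) * g w
        = Real.Gamma (1 + m) / Real.Gamma (1 + β * m))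
    (k : ℕ) (hk : 1 ≤ k) :
    (∫ w in Set.Ioi (0:ℝ), w ^ (-(β * ((k : ℝ) - d / 4))) * g w) *
        Real.sqrt (Real.Gamma (1 + β * (2 * k - (d : ℝ) / 2))) / (k.factorial : ℝ) ≤
      3 * Real.sqrt (2 * β * ((k : ℝ) - d / 4)) *
        Real.sqrt (Real.Gamma (2 * β * (1 - (d : ℝ) / 4))) / Real.Gamma (1 + β) *
        2 ^ (β * ((k : ℝ) - 1)) :=
  a_k_d_sqrt_gamma_bound_general β hβ d hd g hg_nonneg hmom k hk
end
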